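/- Weak duality for the fourth-order polyhedral problem (PFC) and its dual (PFC*) (toward Theorem 5.2). Let A and E be real m×n matrices, d ∈ ℝ^m, f : ℝⁿ × ℝⁿ → ℝ, S ⊆ ℝⁿ × ℝⁿ, X(t) ⊆ ℝⁿ for t ∈ [0,T]. Let x : ℝ → ℝⁿ be a feasible solution: x three-times differentiable with x'''(t) = x'''(0) + ∫₀ᵗ v(s)ds on [0,T] for an integrable v, A x(t) − E v(t) ≤ d a.e., (x^{(j)}(0), x^{(j)}(T)) ∈ S for j = 0,1,2,3, and x(t) ∈ X(t) for all t. Let λ : [0,T] → ℝ^m satisfy λ(t) ≥ 0 for a.e. t, with t ↦ ⟨d, λ(t)⟩ integrable, and such that η(t) := Eᵀ λ(t) is three-times differentiable with η'''(t) = η'''(0) + ∫₀ᵗ ζ(s)ds on [0,T] for an integrable ζ. Let μ* = (μ₀*, μ₁*) ∈ ℝⁿ × ℝⁿ, let ω : [0,T] → ℝ be integrable and c_f, c_S, c_S^0, c_S^1, c_S^2 ∈ ℝ satisfy: ω(t) ≥ ⟨ξ, ζ(t) − Aᵀ λ(t)⟩ for all ξ ∈ X(t), a.e. t; c_f ≥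 ⟨y₀, η'''(0) + μ₀*⟩ + ⟨y₁, μ₁* − η'''(T)⟩ − f(y₀, y₁) for all y₀, y₁ ∈ ℝⁿ; c_S ≥ −⟨s₀, μ₀*⟩ − ⟨s₁, μ₁*⟩ for all (s₀,s₁) ∈ S; and c_S^j ≥ ⟨s₀, (−1)^{j+1} η^{(j)}(0)⟩ + ⟨s₁, (−1)^j η^{(j)}(T)⟩ for all (s₀,s₁) ∈ S, j = 0,1,2. Then f(x(0), x(T)) ≥ −c_f − ∫₀ᵀ ⟨d, λ(t)⟩dt − ∫₀ᵀ ω(t)dt − c_S − c_S^0 − c_S^1 − c_S^2. -/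

import Mathlib

open MeasureTheory Matrix Set

/-!
Integrating by parts four times (Lagrange's identity, valid because `x'''` and `η'''` are
absolutely continuous with derivatives `v` and `ζ`) gives
`∫₀ᵀ (⟨x, ζ⟩ - ⟨v, η⟩) = [⟨x, η'''⟩ - ⟨x', η''⟩ + ⟨x'', η'⟩ - ⟨x''', η⟩]₀ᵀ`.
Pointwise, `⟨x, ζ⟩ - ⟨v, Eᵀλ⟩ = ⟨x, ζ - Aᵀλ⟩ + ⟨Ax - Ev, λ⟩ ≤ ω + ⟨d, λ⟩` by feasibility and
`λ ≥ 0`. On the boundary, the terms in `η'''` are absorbed by `c_f` (whose `μ*`-terms are then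
absorbed by `c_S`), and the term pairing `x⁽ʲ⁾` with `η⁽³⁻ʲ⁾` by `c_S^(3-j)`, since
`(x⁽ʲ⁾(0), x⁽ʲ⁾(T)) ∈ S`.
-/

/-- A feasible solution of the fourth-order polyhedral problem (PFC), with
`v = x⁽⁴⁾` represented by an integrable function. -/
def IsFeasiblePFC (n m : ℕ) (T : ℝ)
    (A E : Matrix (Fin m) (Fin n) ℝ) (d : Fin m → ℝ)
    (S : Set ((Fin n → ℝ) × (Fin n → ℝ)))
    (X : ℝ → Set (Fin n → ℝ))
    (x v : ℝ → (Fin n → ℝ)) : Prop :=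
  (∀ j < 3, Differentiable ℝ (iteratedDeriv j x)) ∧
  IntervalIntegrable v volume 0 T ∧
  (∀ t ∈ Icc (0:ℝ) T,
      iteratedDeriv 3 x t = iteratedDeriv 3 x 0 + ∫ s in (0:ℝ)..t, v s) ∧
  (∀ᵐ t ∂volume, t ∈ Icc (0:ℝ) T → A *ᵥ x t - E *ᵥ v t ≤ d) ∧
  (∀ j < 4, (iteratedDeriv j x 0, iteratedDeriv j x T) ∈ S) ∧
  (∀ t ∈ Icc (0:ℝ) T, x t ∈ X t)

/-- Equivalently, `f` is absolutely continuous on `[[a, b]]` with derivative `f'` almost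
everywhere. -/
structure IsIndefiniteIntegralOn {E : Type*} [NormedAddCommGroup E] [NormedSpace ℝ E]
    (f f' : ℝ → E) (a b : ℝ) : Prop where
  intervalIntegrable : IntervalIntegrable f' volume a b
  eq_add_integral : ∀ t ∈ uIcc a b, f t = f a + ∫ s in a..t, f' s

namespace IsIndefiniteIntegralOn

variable {E F : Type*} [NormedAddCommGroup E] [NormedSpace ℝ E]
  [NormedAddCommGroup F] [NormedSpace ℝ F] {a b : ℝ}

theorem continuousOn {f f' : ℝ → E} (hf : IsIndefiniteIntegralOn f f' a b) :
    ContinuousOn f (uIcc a b) :=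
  (continuousOn_const.add (intervalIntegral.continuousOn_primitive_interval'
    hf.intervalIntegrable left_mem_uIcc)).congr hf.eq_add_integral

theorem of_hasDerivAt [CompleteSpace E] {f f' : ℝ → E}
    (hf : ∀ t ∈ uIcc a b, HasDerivAt f (f' t) t) (hf' : IntervalIntegrable f' volume a b) :
    IsIndefiniteIntegralOn f f' a b where
  intervalIntegrable := hf'
  eq_add_integral t ht := by
    have hsub : uIcc a t ⊆ uIcc a b := uIcc_subset_uIcc_left ht
    rw [intervalIntegral.integral_eq_sub_of_hasDerivAt (fun s hs => hf s (hsub hs))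
      (hf'.mono_set hsub), add_sub_cancel]

theorem map [CompleteSpace E] [CompleteSpace F] {f f' : ℝ → E}
    (hf : IsIndefiniteIntegralOn f f' a b) (L : E →L[ℝ] F) :
    IsIndefiniteIntegralOn (fun t => L (f t)) (fun t => L (f' t)) a b where
  intervalIntegrable :=
    ⟨L.integrable_comp hf.intervalIntegrable.1, L.integrable_comp hf.intervalIntegrable.2⟩
  eq_add_integral t ht := by
    rw [hf.eq_add_integral t ht, map_add, L.intervalIntegral_comp_comm
      (hf.intervalIntegrable.mono_set (uIcc_subset_uIcc_left ht))]

theorem apply {ι : Type*} [Fintype ι] {f f' : ℝ → ι → ℝ}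
    (hf : IsIndefiniteIntegralOn f f' a b) (i : ι) :
    IsIndefiniteIntegralOn (fun t => f t i) (fun t => f' t i) a b :=
  hf.map (ContinuousLinearMap.proj i)

theorem exists_absolutelyContinuousOnInterval {f f' : ℝ → ℝ}
    (hf : IsIndefiniteIntegralOn f f' a b) :
    ∃ F, AbsolutelyContinuousOnInterval F a b ∧ EqOn F f (uIcc a b) ∧
      ∀ᵐ t, t ∈ uIcc a b → deriv F t = f' t := by
  refine ⟨fun t => f a + ∫ s in a..t, f' s, ?_, fun t ht => (hf.eq_add_integral t ht).symm, ?_⟩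
  · simpa [AbsolutelyContinuousOnInterval, dist_add_left] using
      hf.intervalIntegrable.absolutelyContinuousOnInterval_intervalIntegral left_mem_uIcc
  · filter_upwards [hf.intervalIntegrable.ae_hasDerivAt_integral] with t ht hmem
    exact ((ht hmem a left_mem_uIcc).const_add (f a)).deriv

theorem integral_mul_deriv_eq_deriv_mul {f f' g g' : ℝ → ℝ}
    (hf : IsIndefiniteIntegralOn f f' a b) (hg : IsIndefiniteIntegralOn g g' a b) :
    ∫ t in a..b, f t * g' t = f b * g b - f a * g a - ∫ t in a..b, f' t * g t := by
  obtain ⟨F, hF, hFf, hF'⟩ := hf.exists_absolutelyContinuousOnInterval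
  obtain ⟨G, hG, hGg, hG'⟩ := hg.exists_absolutelyContinuousOnInterval
  have hibp := hF.integral_mul_deriv_eq_deriv_mul hG
  rw [hFf left_mem_uIcc, hFf right_mem_uIcc, hGg left_mem_uIcc, hGg right_mem_uIcc] at hibp
  have hleft : ∫ t in a..b, f t * g' t = ∫ t in a..b, F t * deriv G t := by
    refine intervalIntegral.integral_congr_ae ?_
    filter_upwards [hG'] with t ht hmem
    rw [ht (uIoc_subset_uIcc hmem), hFf (uIoc_subset_uIcc hmem)]
  have hright : ∫ t in a..b, f' t * g t = ∫ t in a..b, deriv F t * G t := by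
    refine intervalIntegral.integral_congr_ae ?_
    filter_upwards [hF'] with t ht hmem
    rw [ht (uIoc_subset_uIcc hmem), hGg (uIoc_subset_uIcc hmem)]
  rwa [hleft, hright]

end IsIndefiniteIntegralOn

section

variable {a b : ℝ}

/-- Lagrange's identity for `d⁴/dt⁴`: the bilinear concomitant
`p q''' - p' q'' + p'' q' - p''' q` is a primitive of `p q⁗ - p⁗ q`. -/
theorem integral_mul_sub_mul_eq_concomitant {p p₁ p₂ p₃ p₄ q q₁ q₂ q₃ q₄ : ℝ → ℝ}
    (hp : IsIndefiniteIntegralOn p p₁ a b) (hp₁ : IsIndefiniteIntegralOn p₁ p₂ a b)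
    (hp₂ : IsIndefiniteIntegralOn p₂ p₃ a b) (hp₃ : IsIndefiniteIntegralOn p₃ p₄ a b)
    (hq : IsIndefiniteIntegralOn q q₁ a b) (hq₁ : IsIndefiniteIntegralOn q₁ q₂ a b)
    (hq₂ : IsIndefiniteIntegralOn q₂ q₃ a b) (hq₃ : IsIndefiniteIntegralOn q₃ q₄ a b) :
    ∫ t in a..b, (p t * q₄ t - p₄ t * q t)
      = (p b * q₃ b - p₁ b * q₂ b + p₂ b * q₁ b - p₃ b * q b)
        - (p a * q₃ a - p₁ a * q₂ a + p₂ a * q₁ a - p₃ a * q a) := by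
  have hpq₄ := hp.integral_mul_deriv_eq_deriv_mul hq₃
  have hp₁q₃ := hp₁.integral_mul_deriv_eq_deriv_mul hq₂
  have hqp₄ := hq.integral_mul_deriv_eq_deriv_mul hp₃
  have hq₁p₃ := hq₁.integral_mul_deriv_eq_deriv_mul hp₂
  have hcomm : ∫ t in a..b, q₂ t * p₂ t = ∫ t in a..b, p₂ t * q₂ t := by
    simp only [mul_comm]
  have hcomm' : ∫ t in a..b, p₄ t * q t = ∫ t in a..b, q t * p₄ t := by
    simp only [mul_comm]
  rw [intervalIntegral.integral_sub (hq₃.intervalIntegrable.continuousOn_mul hp.continuousOn)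
    (hp₃.intervalIntegrable.mul_continuousOn hq.continuousOn)]
  linarith

theorem IntervalIntegrable.continuousOn_dotProduct {ι : Type*} [Fintype ι] {p q : ℝ → ι → ℝ}
    (hq : IntervalIntegrable q volume a b) (hp : ContinuousOn p (uIcc a b)) :
    IntervalIntegrable (fun t => p t ⬝ᵥ q t) volume a b := by
  have hsum := IntervalIntegrable.sum (μ := volume) Finset.univ (f := fun i t => p t i * q t i)
    fun i _ => IntervalIntegrable.continuousOn_mul ⟨hq.1.eval i, hq.2.eval i⟩
      ((continuous_apply i).comp_continuousOn hp)
  rw [Finset.sum_fn] at hsum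
  exact hsum

theorem integral_dotProduct_sub_dotProduct_eq_concomitant {ι : Type*} [Fintype ι]
    {p p₁ p₂ p₃ p₄ q q₁ q₂ q₃ q₄ : ℝ → ι → ℝ}
    (hp : IsIndefiniteIntegralOn p p₁ a b) (hp₁ : IsIndefiniteIntegralOn p₁ p₂ a b)
    (hp₂ : IsIndefiniteIntegralOn p₂ p₃ a b) (hp₃ : IsIndefiniteIntegralOn p₃ p₄ a b)
    (hq : IsIndefiniteIntegralOn q q₁ a b) (hq₁ : IsIndefiniteIntegralOn q₁ q₂ a b)
    (hq₂ : IsIndefiniteIntegralOn q₂ q₃ a b) (hq₃ : IsIndefiniteIntegralOn q₃ q₄ a b) :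
    ∫ t in a..b, (p t ⬝ᵥ q₄ t - p₄ t ⬝ᵥ q t)
      = (p b ⬝ᵥ q₃ b - p₁ b ⬝ᵥ q₂ b + p₂ b ⬝ᵥ q₁ b - p₃ b ⬝ᵥ q b)
        - (p a ⬝ᵥ q₃ a - p₁ a ⬝ᵥ q₂ a + p₂ a ⬝ᵥ q₁ a - p₃ a ⬝ᵥ q a) := by
  simp only [dotProduct, ← Finset.sum_sub_distrib, ← Finset.sum_add_distrib]
  rw [intervalIntegral.integral_finsetSum fun i _ =>
    ((hq₃.apply i).intervalIntegrable.continuousOn_mul (hp.apply i).continuousOn).sub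
      ((hp₃.apply i).intervalIntegrable.mul_continuousOn (hq.apply i).continuousOn)]
  exact Finset.sum_congr rfl fun i _ => integral_mul_sub_mul_eq_concomitant (hp.apply i)
    (hp₁.apply i) (hp₂.apply i) (hp₃.apply i) (hq.apply i) (hq₁.apply i) (hq₂.apply i)
    (hq₃.apply i)

end

theorem isIndefiniteIntegralOn_iteratedDeriv {E : Type*} [NormedAddCommGroup E]
    [NormedSpace ℝ E] [CompleteSpace E] {f v : ℝ → E} {a b : ℝ} {k : ℕ}
    (hdiff : ∀ j < k, Differentiable ℝ (iteratedDeriv j f))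
    (hk : IsIndefiniteIntegralOn (iteratedDeriv k f) v a b) {j : ℕ} (hj : j < k) :
    IsIndefiniteIntegralOn (iteratedDeriv j f) (iteratedDeriv (j + 1) f) a b := by
  have hcont : ContinuousOn (iteratedDeriv (j + 1) f) (uIcc a b) := by
    rcases (Nat.succ_le_of_lt hj).lt_or_eq with hlt | rfl
    · exact (hdiff (j + 1) hlt).continuous.continuousOn
    · exact hk.continuousOn
  refine .of_hasDerivAt (fun t _ => ?_) hcont.intervalIntegrable
  rw [iteratedDeriv_succ]
  exact (hdiff j hj t).hasDerivAt

theorem integral_dotProduct_sub_dotProduct_eq_of_iteratedDeriv {ι : Type*} [Fintype ι]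
    {x v y w : ℝ → ι → ℝ} {a b : ℝ}
    (hx : ∀ j < 3, Differentiable ℝ (iteratedDeriv j x))
    (hx₃ : IsIndefiniteIntegralOn (iteratedDeriv 3 x) v a b)
    (hy : ∀ j < 3, Differentiable ℝ (iteratedDeriv j y))
    (hy₃ : IsIndefiniteIntegralOn (iteratedDeriv 3 y) w a b) :
    ∫ t in a..b, (x t ⬝ᵥ w t - v t ⬝ᵥ y t)
      = (x b ⬝ᵥ iteratedDeriv 3 y b - iteratedDeriv 1 x b ⬝ᵥ iteratedDeriv 2 y b
          + iteratedDeriv 2 x b ⬝ᵥ iteratedDeriv 1 y b - iteratedDeriv 3 x b ⬝ᵥ y b)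
        - (x a ⬝ᵥ iteratedDeriv 3 y a - iteratedDeriv 1 x a ⬝ᵥ iteratedDeriv 2 y a
          + iteratedDeriv 2 x a ⬝ᵥ iteratedDeriv 1 y a - iteratedDeriv 3 x a ⬝ᵥ y a) := by
  have hx₀ := isIndefiniteIntegralOn_iteratedDeriv hx hx₃ (j := 0) (by norm_num)
  have hy₀ := isIndefiniteIntegralOn_iteratedDeriv hy hy₃ (j := 0) (by norm_num)
  rw [iteratedDeriv_zero] at hx₀ hy₀
  exact integral_dotProduct_sub_dotProduct_eq_concomitant hx₀
    (isIndefiniteIntegralOn_iteratedDeriv hx hx₃ (j := 1) (by norm_num))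
    (isIndefiniteIntegralOn_iteratedDeriv hx hx₃ (j := 2) (by norm_num)) hx₃ hy₀
    (isIndefiniteIntegralOn_iteratedDeriv hy hy₃ (j := 1) (by norm_num))
    (isIndefiniteIntegralOn_iteratedDeriv hy hy₃ (j := 2) (by norm_num)) hy₃

theorem dotProduct_sub_dotProduct_transpose_mulVec_le {m n : Type*} [Fintype m] [Fintype n]
    {A E : Matrix m n ℝ} {d l : m → ℝ} {x v ζ : n → ℝ}
    (hfeas : A *ᵥ x - E *ᵥ v ≤ d) (hl : 0 ≤ l) :
    x ⬝ᵥ ζ - v ⬝ᵥ (Eᵀ *ᵥ l) ≤ x ⬝ᵥ (ζ - Aᵀ *ᵥ l) + d ⬝ᵥ l := by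
  have hsplit : x ⬝ᵥ ζ - v ⬝ᵥ (Eᵀ *ᵥ l) = x ⬝ᵥ (ζ - Aᵀ *ᵥ l) + (A *ᵥ x - E *ᵥ v) ⬝ᵥ l := by
    simp only [dotProduct_sub, sub_dotProduct, dotProduct_mulVec, vecMul_transpose]
    ring
  rw [hsplit]
  gcongr
  exact dotProduct_le_dotProduct_of_nonneg_right hfeas hl

theorem weak_duality_PFC_general
    (n m : ℕ) (T : ℝ) (hT : 0 < T)
    (A E : Matrix (Fin m) (Fin n) ℝ) (d : Fin m → ℝ)
    (S : Set ((Fin n → ℝ) × (Fin n → ℝ)))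
    (X : ℝ → Set (Fin n → ℝ))
    (f : (Fin n → ℝ) → (Fin n → ℝ) → ℝ)
    (x v : ℝ → (Fin n → ℝ))
    (hfeas : IsFeasiblePFC n m T A E d S X x v)
    -- the dual variable λ ≥ 0 and the arc η = Eᵀλ with η⁽⁴⁾ represented by ζ
    (l : ℝ → (Fin m → ℝ))
    (hl : ∀ᵐ t ∂volume, t ∈ Icc (0:ℝ) T → 0 ≤ l t)
    (hdl : IntervalIntegrable (fun t => d ⬝ᵥ l t) volume 0 T)
    (η : ℝ → (Fin n → ℝ))
    (hηdef : ∀ t, η t = Eᵀ *ᵥ l t)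
    (hηdiff : ∀ j < 3, Differentiable ℝ (iteratedDeriv j η))
    (ζ : ℝ → (Fin n → ℝ))
    (hζ : IntervalIntegrable ζ volume 0 T)
    (hη : ∀ t ∈ Icc (0:ℝ) T,
      iteratedDeriv 3 η t = iteratedDeriv 3 η 0 + ∫ s in (0:ℝ)..t, ζ s)
    (μ₀ μ₁ : Fin n → ℝ)
    (ω : ℝ → ℝ) (hωint : IntervalIntegrable ω volume 0 T)
    (cf cS cS0 cS1 cS2 : ℝ)
    (hω : ∀ᵐ t ∂volume, t ∈ Icc (0:ℝ) T → ∀ ξ ∈ X t, ξ ⬝ᵥ (ζ t - Aᵀ *ᵥ l t) ≤ ω t)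
    (hcf : ∀ y₀ y₁ : Fin n → ℝ,
      y₀ ⬝ᵥ (iteratedDeriv 3 η 0 + μ₀) + y₁ ⬝ᵥ (μ₁ - iteratedDeriv 3 η T)
        - f y₀ y₁ ≤ cf)
    (hcS : ∀ s ∈ S, -(s.1 ⬝ᵥ μ₀) - s.2 ⬝ᵥ μ₁ ≤ cS)
    (hcS0 : ∀ s ∈ S, s.1 ⬝ᵥ ((-1:ℝ)^(1:ℕ) • iteratedDeriv 0 η 0)
        + s.2 ⬝ᵥ ((-1:ℝ)^(0:ℕ) • iteratedDeriv 0 η T) ≤ cS0)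
    (hcS1 : ∀ s ∈ S, s.1 ⬝ᵥ ((-1:ℝ)^(2:ℕ) • iteratedDeriv 1 η 0)
        + s.2 ⬝ᵥ ((-1:ℝ)^(1:ℕ) • iteratedDeriv 1 η T) ≤ cS1)
    (hcS2 : ∀ s ∈ S, s.1 ⬝ᵥ ((-1:ℝ)^(3:ℕ) • iteratedDeriv 2 η 0)
        + s.2 ⬝ᵥ ((-1:ℝ)^(2:ℕ) • iteratedDeriv 2 η T) ≤ cS2) :
    -cf - (∫ t in (0:ℝ)..T, d ⬝ᵥ l t) - (∫ t in (0:ℝ)..T, ω t)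
      - cS - cS0 - cS1 - cS2 ≤ f (x 0) (x T) := by
  obtain ⟨hxdiff, hv, hx3, hAx, hS, hX⟩ := hfeas
  have hIcc : Icc 0 T = uIcc 0 T := (uIcc_of_le hT.le).symm
  have hlagrange := integral_dotProduct_sub_dotProduct_eq_of_iteratedDeriv
    hxdiff ⟨hv, hIcc ▸ hx3⟩ hηdiff ⟨hζ, hIcc ▸ hη⟩
  have hxc : Continuous x := by
    simpa only [iteratedDeriv_zero] using (hxdiff 0 (by norm_num)).continuous
  have hηc : Continuous η := by
    simpa only [iteratedDeriv_zero] using (hηdiff 0 (by norm_num)).continuous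
  have hpointwise : ∀ᵐ t ∂volume.restrict (Icc 0 T),
      x t ⬝ᵥ ζ t - v t ⬝ᵥ η t ≤ d ⬝ᵥ l t + ω t := by
    filter_upwards [ae_restrict_mem measurableSet_Icc, ae_restrict_of_ae hl,
      ae_restrict_of_ae hAx, ae_restrict_of_ae hω] with t ht hlt hAxt hωt
    rw [hηdef]
    linarith [dotProduct_sub_dotProduct_transpose_mulVec_le (ζ := ζ t) (hAxt ht) (hlt ht),
      hωt ht (x t) (hX t ht)]
  have hintegrable : IntervalIntegrable (fun t => x t ⬝ᵥ ζ t - v t ⬝ᵥ η t) volume 0 T :=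
    (hζ.continuousOn_dotProduct hxc.continuousOn).sub
      (by simpa only [dotProduct_comm] using hv.continuousOn_dotProduct hηc.continuousOn)
  have hweak := intervalIntegral.integral_mono_ae_restrict hT.le hintegrable (hdl.add hωint)
    hpointwise
  rw [intervalIntegral.integral_add hdl hωint, hlagrange] at hweak
  have hf := hcf (x 0) (x T)
  have h := hcS _ (by simpa only [iteratedDeriv_zero] using hS 0 (by norm_num))
  have h₀ := hcS0 _ (hS 3 (by norm_num))
  have h₁ := hcS1 _ (hS 2 (by norm_num))
  have h₂ := hcS2 _ (hS 1 (by norm_num))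
  simp only [iteratedDeriv_zero, pow_zero, pow_succ, one_mul, neg_one_mul, neg_neg, one_smul,
    neg_smul, dotProduct_neg, dotProduct_add, dotProduct_sub] at hf h₀ h₁ h₂
  linarith

/-- Weak duality between the fourth-order polyhedral problem (PFC) and its
dual (PFC*). -/
theorem weak_duality_PFC
    (n m : ℕ) (hn : 1 ≤ n) (hm : 1 ≤ m) (T : ℝ) (hT : 0 < T)
    (A E : Matrix (Fin m) (Fin n) ℝ) (d : Fin m → ℝ)
    (S : Set ((Fin n → ℝ) × (Fin n → ℝ)))
    (X : ℝ → Set (Fin n → ℝ))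
    (f : (Fin n → ℝ) → (Fin n → ℝ) → ℝ)
    (x v : ℝ → (Fin n → ℝ))
    (hfeas : IsFeasiblePFC n m T A E d S X x v)
    -- the dual variable λ ≥ 0 and the arc η = Eᵀλ with η⁽⁴⁾ represented by ζ
    (l : ℝ → (Fin m → ℝ))
    (hl : ∀ᵐ t ∂volume, t ∈ Icc (0:ℝ) T → 0 ≤ l t)
    (hdl : IntervalIntegrable (fun t => d ⬝ᵥ l t) volume 0 T)
    (η : ℝ → (Fin n → ℝ))
    (hηdef : ∀ t, η t = Eᵀ *ᵥ l t)
    (hηdiff : ∀ j < 3, Differentiable ℝ (iteratedDeriv j η))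
    (ζ : ℝ → (Fin n → ℝ))
    (hζ : IntervalIntegrable ζ volume 0 T)
    (hη : ∀ t ∈ Icc (0:ℝ) T,
      iteratedDeriv 3 η t = iteratedDeriv 3 η 0 + ∫ s in (0:ℝ)..t, ζ s)
    (μ₀ μ₁ : Fin n → ℝ)
    (ω : ℝ → ℝ) (hωint : IntervalIntegrable ω volume 0 T)
    (cf cS cS0 cS1 cS2 : ℝ)
    (hω : ∀ᵐ t ∂volume, t ∈ Icc (0:ℝ) T → ∀ ξ ∈ X t, ξ ⬝ᵥ (ζ t - Aᵀ *ᵥ l t) ≤ ω t)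
    (hcf : ∀ y₀ y₁ : Fin n → ℝ,
      y₀ ⬝ᵥ (iteratedDeriv 3 η 0 + μ₀) + y₁ ⬝ᵥ (μ₁ - iteratedDeriv 3 η T)
        - f y₀ y₁ ≤ cf)
    (hcS : ∀ s ∈ S, -(s.1 ⬝ᵥ μ₀) - s.2 ⬝ᵥ μ₁ ≤ cS)
    (hcS0 : ∀ s ∈ S, s.1 ⬝ᵥ ((-1:ℝ)^(1:ℕ) • iteratedDeriv 0 η 0)
        + s.2 ⬝ᵥ ((-1:ℝ)^(0:ℕ) • iteratedDeriv 0 η T) ≤ cS0)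
    (hcS1 : ∀ s ∈ S, s.1 ⬝ᵥ ((-1:ℝ)^(2:ℕ) • iteratedDeriv 1 η 0)
        + s.2 ⬝ᵥ ((-1:ℝ)^(1:ℕ) • iteratedDeriv 1 η T) ≤ cS1)
    (hcS2 : ∀ s ∈ S, s.1 ⬝ᵥ ((-1:ℝ)^(3:ℕ) • iteratedDeriv 2 η 0)
        + s.2 ⬝ᵥ ((-1:ℝ)^(2:ℕ) • iteratedDeriv 2 η T) ≤ cS2) :
    -cf - (∫ t in (0:ℝ)..T, d ⬝ᵥ l t) - (∫ t in (0:ℝ)..T, ω t)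
      - cS - cS0 - cS1 - cS2 ≤ f (x 0) (x T) :=
  weak_duality_PFC_general n m T hT A E d S X f x v hfeas l hl hdl η hηdef hηdiff ζ hζ hη μ₀ μ₁ ω
    hωint cf cS cS0 cS1 cS2 hω hcf hcS hcS0 hcS1 hcS2
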